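/- Let 𝒢 be a second countable locally compact Hausdorff étale groupoid. If g ∈ C_c(𝒢) is supported on a single bisection and f ∈ B_{0,l}(𝒢), then the convolution g*f belongs to B_{0,l}(𝒢); likewise, if g ∈ B_{0,l}(𝒢) and f ∈ C_c(𝒢) is supported on a single bisection, then g*f belongs to B_{0,l}(𝒢). (Here h ∈ B_{0,l}(𝒢) if and only if h* ∈ B_{0,l}(𝒢).) -/

import Mathlib

open scoped BigOperators ComplexConjugate ENNReal NNReal
open MeasureTheory Filter Topology

noncomputable section

instance : Fact ((1 : ℝ≥0∞) ≤ 2) := ⟨one_le_two⟩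

/-- The ambient separable Hilbert space `ℓ²(ℕ, ℂ)`, in which the fibres of any
Borel Hilbert bundle with a fundamental sequence may be realized. -/
abbrev Hamb : Type := lp (fun _ : ℕ => ℂ) 2

instance : MeasurableSpace Hamb := borel _
instance : BorelSpace Hamb := ⟨rfl⟩

/-- A bounded complex-valued function. -/
def BddFun {X : Type} (f : X → ℂ) : Prop := ∃ M : ℝ, ∀ x, ‖f x‖ ≤ M

/-- A (second countable locally compact Hausdorff) étale groupoid: a groupoid structure
on `G` (with total operations, the product being meaningful on composable pairs
`s x = r y`), such that inversion and multiplication are continuous and the range map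
is a local homeomorphism.  The standing topological assumptions (Hausdorff, second
countable, locally compact) are imposed as typeclass assumptions in the theorems. -/
structure EtaleGroupoid (G : Type) [TopologicalSpace G] where
  mul : G → G → G
  inv : G → G
  r : G → G
  s : G → G
  r_def : ∀ x, r x = mul x (inv x)
  s_def : ∀ x, s x = mul (inv x) x
  inv_inv : ∀ x, inv (inv x) = x
  s_inv : ∀ x, s (inv x) = r x
  mul_assoc' : ∀ x y z, s x = r y → s y = r z → mul (mul x y) z = mul x (mul y z)
  r_mul : ∀ x y, s x = r y → r (mul x y) = r x
  s_mul : ∀ x y, s x = r y → s (mul x y) = s y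
  inv_mul_cancel' : ∀ x y, s x = r y → mul (inv x) (mul x y) = y
  mul_inv_cancel' : ∀ x y, s x = r y → mul (mul x y) (inv y) = x
  continuous_inv : Continuous inv
  continuous_r : Continuous r
  continuous_s : Continuous s
  continuous_mul : ∀ x y : G, s x = r y → ∀ W : Set G, IsOpen W → mul x y ∈ W →
    ∃ U V : Set G, IsOpen U ∧ IsOpen V ∧ x ∈ U ∧ y ∈ V ∧
      ∀ x' ∈ U, ∀ y' ∈ V, s x' = r y' → mul x' y' ∈ W
  etale : ∀ x : G, ∃ U : Set G, IsOpen U ∧ x ∈ U ∧ Set.InjOn r U ∧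
    ∀ V : Set G, V ⊆ U → IsOpen V → IsOpen (r '' V)

namespace EtaleGroupoid

variable {G : Type} [TopologicalSpace G] [MeasurableSpace G]

/-- The unit space `𝒢⁽⁰⁾`. -/
def units (g : EtaleGroupoid G) : Set G := Set.range g.r

/-- The range fibre `𝒢^u = r⁻¹(u)`. -/
def rFiber (g : EtaleGroupoid G) (u : G) : Set G := {x | g.r x = u}

/-- The source fibre `𝒢_u = s⁻¹(u)`. -/
def sFiber (g : EtaleGroupoid G) (u : G) : Set G := {x | g.s x = u}

/-- Membership in `C_c(𝒢)`: continuous with compact support. -/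
def IsCc (_g : EtaleGroupoid G) (f : G → ℂ) : Prop := Continuous f ∧ HasCompactSupport f

/-- Convolution: `(f * h)(x) = Σ_{y ∈ 𝒢^{r(x)}} f(y) h(y⁻¹ x)`. -/
def conv (g : EtaleGroupoid G) (f h : G → ℂ) : G → ℂ :=
  fun x => ∑' y : g.rFiber (g.r x), f (y : G) * h (g.mul (g.inv (y : G)) x)

/-- The involution `f^*(x) = conj (f (x⁻¹))`. -/
def star' (g : EtaleGroupoid G) (f : G → ℂ) : G → ℂ := fun x => conj (f (g.inv x))

/-- Iterated convolution powers: `convIter g h n = h^{*(n+1)}`. -/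
def convIter (g : EtaleGroupoid G) (h : G → ℂ) : ℕ → G → ℂ
  | 0 => h
  | n + 1 => g.conv (convIter g h n) h

/-- `B(𝒢)`: bounded Borel functions. -/
def BG (_g : EtaleGroupoid G) : Set (G → ℂ) := {f | Measurable f ∧ BddFun f}

/-- `B_c(𝒢)`: compactly supported bounded Borel functions. -/
def Bc (_g : EtaleGroupoid G) : Set (G → ℂ) :=
  {f | Measurable f ∧ BddFun f ∧ HasCompactSupport f}

/-- `B_{0,l}(𝒢)`: bounded Borel functions which are locally `B₀`, i.e. whose
restriction to `𝒢(K)` vanishes at infinity for every compact `K ⊆ 𝒢⁽⁰⁾`. -/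
def B0l (g : EtaleGroupoid G) : Set (G → ℂ) :=
  {f | Measurable f ∧ BddFun f ∧
    ∀ K : Set G, K ⊆ g.units → IsCompact K → ∀ ε : ℝ, 0 < ε →
      ∃ C : Set G, IsCompact C ∧ ∀ x : G, g.r x ∈ K → g.s x ∈ K → x ∉ C → ‖f x‖ < ε}

/-- An algebraic ideal `D ⊴ B(𝒢)`. -/
structure IsBorelIdeal (g : EtaleGroupoid G) (D : Set (G → ℂ)) : Prop where
  subset_BG : D ⊆ g.BG
  add_mem : ∀ f ∈ D, ∀ h ∈ D, f + h ∈ D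
  smul_mem : ∀ f ∈ D, ∀ c : ℂ, c • f ∈ D
  mul_mem : ∀ f ∈ D, ∀ h ∈ g.BG, h * f ∈ D

/-- A positive definite function on the groupoid. -/
def IsPosDef (g : EtaleGroupoid G) (F : G → ℂ) : Prop :=
  ∀ u ∈ g.units, ∀ n : ℕ, ∀ x : Fin n → G, (∀ i, x i ∈ g.rFiber u) → ∀ c : Fin n → ℂ,
    0 ≤ (∑ i, ∑ j, conj (c i) * c j * F (g.mul (g.inv (x i)) (x j))).re ∧
    (∑ i, ∑ j, conj (c i) * c j * F (g.mul (g.inv (x i)) (x j))).im = 0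

/-- A function is locally `C₀` (in norm) : restriction to `𝒢(K)` vanishes at
infinity for every compact `K ⊆ 𝒢⁽⁰⁾`. -/
def IsLocallyC0 (g : EtaleGroupoid G) (F : G → ℂ) : Prop :=
  ∀ K : Set G, K ⊆ g.units → IsCompact K → ∀ ε : ℝ, 0 < ε →
    ∃ C : Set G, IsCompact C ∧ ∀ x : G, g.r x ∈ K → g.s x ∈ K → x ∉ C → ‖F x‖ < ε

/-- The Haagerup property for an étale groupoid. -/
def HaagerupProperty (g : EtaleGroupoid G) : Prop :=
  ∃ F : ℕ → G → ℂ, (∀ n, Continuous (F n)) ∧ (∀ n, g.IsPosDef (F n)) ∧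
    (∀ n, ∀ u ∈ g.units, F n u = 1) ∧
    (∀ K : Set G, IsCompact K → ∀ ε : ℝ, 0 < ε →
      ∃ N : ℕ, ∀ n : ℕ, N ≤ n → ∀ x ∈ K, ‖F n x - 1‖ < ε) ∧
    (∀ n, Continuous (F n) ∧ g.IsLocallyC0 (F n))

/-- The lower integral of `F` against the induced measure `ν`:
`∫ F dν = ∫_{𝒢⁽⁰⁾} Σ_{x ∈ 𝒢^u} F(x) dμ(u)`. -/
def fiberL (g : EtaleGroupoid G) (μ : Measure G) (F : G → ℝ≥0∞) : ℝ≥0∞ :=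
  ∫⁻ u, ∑' x : g.rFiber u, F (x : G) ∂μ

/-- The lower integral of `F` against `ν⁻¹` (source fibres). -/
def fiberLs (g : EtaleGroupoid G) (μ : Measure G) (F : G → ℝ≥0∞) : ℝ≥0∞ :=
  ∫⁻ u, ∑' x : g.sFiber u, F (x : G) ∂μ

/-- The induced measure `ν` of a set. -/
def nu (g : EtaleGroupoid G) (μ : Measure G) (E : Set G) : ℝ≥0∞ :=
  g.fiberL μ (E.indicator 1)

/-- `μ` is a quasi-invariant probability measure on the unit space: the induced
measure `ν` and its image `ν⁻¹` under inversion are mutually absolutely continuous. -/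
def IsQuasiInvariant (g : EtaleGroupoid G) (μ : Measure G) : Prop :=
  IsProbabilityMeasure μ ∧ μ g.unitsᶜ = 0 ∧
    ∀ E : Set G, MeasurableSet E → (g.nu μ E = 0 ↔ g.nu μ (g.inv ⁻¹' E) = 0)

/-- `μ` is an invariant probability measure on the unit space: `ν = ν⁻¹`. -/
def IsInvariant (g : EtaleGroupoid G) (μ : Measure G) : Prop :=
  IsProbabilityMeasure μ ∧ μ g.unitsᶜ = 0 ∧
    ∀ E : Set G, MeasurableSet E → g.nu μ E = g.nu μ (g.inv ⁻¹' E)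

/-- A modular function (Radon–Nikodym derivative `Δ = dν/dν⁻¹`), chosen to be a
Borel homomorphism. -/
structure IsModular (g : EtaleGroupoid G) (μ : Measure G) (Δ : G → ℝ) : Prop where
  meas : Measurable Δ
  pos : ∀ x, 0 < Δ x
  hom : ∀ x y, g.s x = g.r y → Δ (g.mul x y) = Δ x * Δ y
  inv_eq : ∀ x, Δ (g.inv x) = (Δ x)⁻¹
  rn : ∀ F : G → ℝ≥0∞, Measurable F →
    g.fiberL μ F = g.fiberLs μ fun x => F x * ENNReal.ofReal (Δ x)

end EtaleGroupoid

/-- A unitary representation of the groupoid on a Borel Hilbert bundle.  The fibres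
are realized as (closed) subspaces of an ambient Hilbert space `E`; `op x` is a
unitary `H(s x) → H(r x)`, the assignment is a Borel homomorphism (Borel-ness being
expressed through the matrix coefficients of a fundamental sequence of Borel
sections of the bundle). -/
structure GRep {G : Type} [TopologicalSpace G] [MeasurableSpace G] (g : EtaleGroupoid G)
    (E : Type) [NormedAddCommGroup E] [InnerProductSpace ℂ E] [MeasurableSpace E] where
  fib : G → Submodule ℂ E
  op : G → E → E
  mapsTo : ∀ x : G, ∀ v ∈ fib (g.s x), op x v ∈ fib (g.r x)
  map_add : ∀ x : G, ∀ v ∈ fib (g.s x), ∀ w ∈ fib (g.s x), op x (v + w) = op x v + op x w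
  map_smul : ∀ x : G, ∀ c : ℂ, ∀ v ∈ fib (g.s x), op x (c • v) = c • op x v
  inner_op : ∀ x : G, ∀ v ∈ fib (g.s x), ∀ w ∈ fib (g.s x),
    (inner ℂ (op x v) (op x w) : ℂ) = (inner ℂ v w : ℂ)
  surj' : ∀ x : G, ∀ w ∈ fib (g.r x), ∃ v ∈ fib (g.s x), op x v = w
  mul_op : ∀ x y : G, g.s x = g.r y → ∀ v ∈ fib (g.s y), op (g.mul x y) v = op x (op y v)
  unit_op : ∀ u ∈ g.units, ∀ v ∈ fib u, op u v = v
  fundSeq : ℕ → G → E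
  fundSeq_mem : ∀ n : ℕ, ∀ u ∈ g.units, fundSeq n u ∈ fib u
  fundSeq_meas : ∀ n : ℕ, Measurable (fundSeq n)
  fundSeq_dense : ∀ u ∈ g.units, ∀ v ∈ fib u, ∀ ε : ℝ, 0 < ε →
    ∃ w ∈ Submodule.span ℂ (Set.range fun n => fundSeq n u), ‖v - w‖ < ε
  fund_coeff_meas : ∀ n m : ℕ,
    Measurable fun x : G => (inner ℂ (fundSeq m (g.r x)) (op x (fundSeq n (g.s x))) : ℂ)

namespace GRep

variable {G : Type} [TopologicalSpace G] [MeasurableSpace G] {g : EtaleGroupoid G}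
variable {E : Type} [NormedAddCommGroup E] [InnerProductSpace ℂ E] [MeasurableSpace E]

/-- The matrix coefficient `x ↦ ⟨π(x) ξ(s x), η(r x)⟩` (linear in `ξ`). -/
def coeff (π : GRep g E) (ξ η : G → E) : G → ℂ :=
  fun x => (inner ℂ (η (g.r x)) (π.op x (ξ (g.s x))) : ℂ)

/-- A fundamental sequence of Borel sections of the bundle of `π`. -/
structure IsFundSeq (π : GRep g E) (f : ℕ → G → E) : Prop where
  mem : ∀ n : ℕ, ∀ u ∈ g.units, f n u ∈ π.fib u
  meas : ∀ n : ℕ, Measurable (f n)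
  dense : ∀ u ∈ g.units, ∀ v ∈ π.fib u, ∀ ε : ℝ, 0 < ε →
    ∃ w ∈ Submodule.span ℂ (Set.range fun n => f n u), ‖v - w‖ < ε
  coeff_meas : ∀ n m : ℕ, Measurable (π.coeff (f n) (f m))

/-- `π` is a `D`-representation: some fundamental sequence has all its matrix
coefficients in `D`. -/
def IsDRep (π : GRep g E) (D : Set (G → ℂ)) : Prop :=
  ∃ f : ℕ → G → E, π.IsFundSeq f ∧ ∀ n m : ℕ, π.coeff (f n) (f m) ∈ D

/-- A square-integrable Borel section of the bundle of `π`, i.e. a vector of the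
direct integral `∫^⊕ H_π(u) dμ(u)`. -/
structure IsL2Section (π : GRep g E) (μ : MeasureTheory.Measure G) (ξ : G → E) : Prop where
  mem : ∀ u ∈ g.units, ξ u ∈ π.fib u
  meas : Measurable ξ
  sq : MeasureTheory.Integrable (fun u => ‖ξ u‖ ^ 2) μ

/-- `⟨π_μ(f) ξ, η⟩ = ∫_𝒢 f(x) ⟨π(x)ξ(s x), η(r x)⟩ Δ(x)^{-1/2} dν(x)`, the
sesquilinear pairing of the integrated form of `π` w.r.t. `μ` (with modular
function `Δ`). -/
def pairing (π : GRep g E) (μ : MeasureTheory.Measure G) (Δ : G → ℝ) (f : G → ℂ)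
    (ξ η : G → E) : ℂ :=
  ∫ u, (∑' x : g.rFiber u,
    f (x : G) * ((Δ (x : G) ^ (-(1 / 2) : ℝ) : ℝ) : ℂ) * π.coeff ξ η (x : G)) ∂μ

/-- The operator norm `‖π_μ(f)‖` of the integrated form, expressed as the supremum
of the pairings over the unit ball of (the dense subspace of square-integrable
Borel sections of) the direct integral. -/
def intNorm (π : GRep g E) (μ : MeasureTheory.Measure G) (Δ : G → ℝ) (f : G → ℂ) : ℝ :=
  sSup {t : ℝ | ∃ ξ η : G → E, π.IsL2Section μ ξ ∧ π.IsL2Section μ η ∧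
    (∫ u, ‖ξ u‖ ^ 2 ∂μ) ≤ 1 ∧ (∫ u, ‖η u‖ ^ 2 ∂μ) ≤ 1 ∧
    t = ‖π.pairing μ Δ f ξ η‖}

end GRep

namespace EtaleGroupoid

variable {G : Type} [TopologicalSpace G] [MeasurableSpace G]

/-- The set of quasi-invariant probability measures on the unit space. -/
def QIMeasures (g : EtaleGroupoid G) : Set (MeasureTheory.Measure G) :=
  {μ | g.IsQuasiInvariant μ}

/-- The seminorm `‖f‖_{D,ℳ} = sup {‖π_μ(f)‖ : π a D-representation, μ ∈ ℳ}`. -/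
def DNorm (g : EtaleGroupoid G) (D : Set (G → ℂ)) (M : Set (MeasureTheory.Measure G))
    (f : G → ℂ) : ℝ :=
  sSup {t : ℝ | ∃ π : GRep g Hamb, π.IsDRep D ∧ ∃ μ ∈ M, ∃ Δ : G → ℝ,
    g.IsModular μ Δ ∧ t = π.intNorm μ Δ f}

/-- The full norm `‖f‖_max = sup {‖π_μ(f)‖ : π any representation, μ quasi-invariant}`. -/
def maxNorm (g : EtaleGroupoid G) (f : G → ℂ) : ℝ :=
  sSup {t : ℝ | ∃ π : GRep g Hamb, ∃ μ ∈ g.QIMeasures, ∃ Δ : G → ℝ,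
    g.IsModular μ Δ ∧ t = π.intNorm μ Δ f}

/-- `‖Ind(δ_u)(f)‖`: the norm of left convolution by `f` on `ℓ²(𝒢_u)`, expressed as a
supremum of pairings against finitely supported vectors in the unit ball. -/
def IndDeltaNorm (g : EtaleGroupoid G) (u : G) (f : G → ℂ) : ℝ :=
  sSup {t : ℝ | ∃ ξ η : G → ℂ,
    (Function.support ξ).Finite ∧ Function.support ξ ⊆ g.sFiber u ∧
    (Function.support η).Finite ∧ Function.support η ⊆ g.sFiber u ∧
    (∑' x : g.sFiber u, ‖ξ (x : G)‖ ^ 2) ≤ 1 ∧ (∑' x : g.sFiber u, ‖η (x : G)‖ ^ 2) ≤ 1 ∧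
    t = ‖∑' x : g.sFiber u, g.conv f ξ (x : G) * conj (η (x : G))‖}

/-- The reduced norm `‖f‖_r = sup_{u ∈ 𝒢⁽⁰⁾} ‖Ind(δ_u)(f)‖`. -/
def redNorm (g : EtaleGroupoid G) (f : G → ℂ) : ℝ :=
  sSup {t : ℝ | ∃ u ∈ g.units, t = g.IndDeltaNorm u f}

/-- `‖Ind(μ)(f)‖`: the norm of left convolution by `f` on `L²(𝒢, ν⁻¹)`, expressed as a
supremum of pairings against bounded compactly supported Borel functions in the unit
ball of `L²(𝒢, ν⁻¹)`. -/
def IndMuNorm (g : EtaleGroupoid G) (μ : MeasureTheory.Measure G) (f : G → ℂ) : ℝ :=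
  sSup {t : ℝ | ∃ ξ η : G → ℂ, Measurable ξ ∧ Measurable η ∧ BddFun ξ ∧ BddFun η ∧
    HasCompactSupport ξ ∧ HasCompactSupport η ∧
    (∫ u, (∑' x : g.sFiber u, ‖ξ (x : G)‖ ^ 2) ∂μ) ≤ 1 ∧
    (∫ u, (∑' x : g.sFiber u, ‖η (x : G)‖ ^ 2) ∂μ) ≤ 1 ∧
    t = ‖∫ u, (∑' x : g.sFiber u, g.conv f ξ (x : G) * conj (η (x : G))) ∂μ‖}

/-- The norm of `L²(𝒢, ν⁻¹)`. -/
def L2s (g : EtaleGroupoid G) (μ : MeasureTheory.Measure G) (h : G → ℂ) : ℝ :=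
  Real.sqrt (∫ u, (∑' x : g.sFiber u, ‖h (x : G)‖ ^ 2) ∂μ)

/-- Products of `n` elements of `S` (units for `n = 0`). -/
def Spow (g : EtaleGroupoid G) (S : Set G) : ℕ → Set G
  | 0 => g.units
  | n + 1 => {z | ∃ x ∈ S, ∃ y ∈ Spow g S n, g.s x = g.r y ∧ z = g.mul x y}

/-- The ball `∪_{k ≤ n} S^k`. -/
def ball (g : EtaleGroupoid G) (S : Set G) (n : ℕ) : Set G :=
  ⋃ k ∈ Finset.range (n + 1), g.Spow S k

/-- The length function `l_S(x) = min {n ≥ 0 : x ∈ ∪_{k ≤ n} S^k}`. -/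
def lS (g : EtaleGroupoid G) (S : Set G) (x : G) : ℕ := sInf {n : ℕ | x ∈ g.ball S n}

/-- The fibre Cayley-graph metric `d(x, y) = l_S (x⁻¹ y)` (as a real number). -/
def dS (g : EtaleGroupoid G) (S : Set G) (x y : G) : ℝ := (g.lS S (g.mul (g.inv x) y) : ℝ)

/-- `S` is a compact open symmetric generating set making all fibre Cayley graphs
`δ`-hyperbolic; i.e. `𝒢` is a hyperbolic groupoid (witnessed by `S` and `δ`). -/
structure IsHyperbolicGen (g : EtaleGroupoid G) (S : Set G) (δ : ℝ) : Prop where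
  compact : IsCompact S
  isOpen : IsOpen S
  symm : ∀ x ∈ S, g.inv x ∈ S
  gen : ∀ x : G, ∃ n : ℕ, 1 ≤ n ∧ x ∈ g.Spow S n
  delta_pos : 0 < δ
  hyp : ∀ u ∈ g.units, ∀ a ∈ g.rFiber u, ∀ b ∈ g.rFiber u, ∀ c ∈ g.rFiber u,
    ∀ d ∈ g.rFiber u,
      g.dS S a b + g.dS S c d ≤ max (g.dS S a c + g.dS S b d) (g.dS S a d + g.dS S b c) + δ

/-- The ideal `ℒ^p_μ(𝒢)` of bounded Borel functions which are `p`-integrable for the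
induced measure `ν`. -/
def LpIdeal (g : EtaleGroupoid G) (μ : MeasureTheory.Measure G) (p : ℝ) : Set (G → ℂ) :=
  {f | Measurable f ∧ BddFun f ∧
    g.fiberL μ (fun x => ENNReal.ofReal (‖f x‖ ^ p)) ≠ ⊤}

/-- The `ℒ^p_μ`-seminorm `|f|_p`. -/
def lpSeminorm (g : EtaleGroupoid G) (μ : MeasureTheory.Measure G) (p : ℝ) (f : G → ℂ) : ℝ :=
  ((g.fiberL μ fun x => ENNReal.ofReal (‖f x‖ ^ p)).toReal) ^ (1 / p)

/-- `‖f‖_{ℒ^p_μ(𝒢), μ}`: the supremum of `‖π_μ(f)‖` over all `ℒ^p_μ(𝒢)`-representations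
(for an invariant `μ`, so `Δ ≡ 1`). -/
def LpDNorm (g : EtaleGroupoid G) (μ : MeasureTheory.Measure G) (p : ℝ) (f : G → ℂ) : ℝ :=
  sSup {t : ℝ | ∃ π : GRep g Hamb, π.IsDRep (g.LpIdeal μ p) ∧
    t = π.intNorm μ (fun _ => 1) f}

end EtaleGroupoid

section Statements

variable {G : Type} [TopologicalSpace G] [T2Space G] [SecondCountableTopology G]
  [LocallyCompactSpace G] [MeasurableSpace G] [BorelSpace G]

/-- A bisection: a subset of `𝒢` on which both the range and source maps are injective. -/
def IsBisection (g : EtaleGroupoid G) (U : Set G) : Prop :=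
  Set.InjOn g.r U ∧ Set.InjOn g.s U

/-!
If `k` is supported on a set on which `r` is injective, the sum defining `(k * f)(x)` has at
most one nonzero term `k(y) f(y⁻¹x)`. This bounds `k * f`. It also makes `k * f` small on `𝒢(K)`
off the compact set `(supp k) C`, where `C` is such that `f` is small on `𝒢(K ∪ s(supp k))`
off `C`: for `x ∉ (supp k) C` the point `y⁻¹x` lies off `C`. For measurability, on the domain
of a local inverse `σ` of `r` the sum is `k(σ(r x)) f(σ(r x)⁻¹x)`, and finitely many such
domains cover `supp k`. The case of `f` on the right follows from the case of `k` on the left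
by the involution: `(h * f)* = f* * h*`, and `f*` is supported on the bisection `U⁻¹`.
-/

namespace EtaleGroupoid

open Function Set

variable {G : Type} [TopologicalSpace G] (g : EtaleGroupoid G)

theorem r_inv (x : G) : g.r (g.inv x) = g.s x := by
  simpa only [g.inv_inv] using (g.s_inv (g.inv x)).symm

theorem s_mem_units (x : G) : g.s x ∈ g.units :=
  ⟨g.inv x, g.r_inv x⟩

variable {g}

theorem r_inv_mul {x y : G} (hyx : g.r y = g.r x) : g.r (g.mul (g.inv y) x) = g.s y := by
  rw [g.r_mul _ _ ((g.s_inv y).trans hyx), r_inv]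

theorem s_inv_mul {x y : G} (hyx : g.r y = g.r x) : g.s (g.mul (g.inv y) x) = g.s x :=
  g.s_mul _ _ ((g.s_inv y).trans hyx)

theorem mul_inv_cancel_left {x y : G} (hyx : g.r y = g.r x) :
    g.mul y (g.mul (g.inv y) x) = x := by
  simpa only [g.inv_inv] using g.inv_mul_cancel' (g.inv y) x ((g.s_inv y).trans hyx)

theorem inv_mul_inv_inv_mul {x z : G} (hzx : g.r z = g.r x) :
    g.inv (g.mul (g.inv (g.inv (g.mul (g.inv z) x))) (g.inv x)) = z := by
  rw [g.inv_inv, g.mul_inv_cancel' _ _ ((g.s_inv z).trans hzx), g.inv_inv]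

variable (g)

theorem continuousOn_mul :
    ContinuousOn (fun p : G × G => g.mul p.1 p.2) {p | g.s p.1 = g.r p.2} := by
  intro p hp
  refine tendsto_nhds.2 fun W hW hmem => ?_
  obtain ⟨U, V, hU, hV, hxU, hyV, hUV⟩ := g.continuous_mul p.1 p.2 hp W hW hmem
  rw [mem_nhdsWithin]
  exact ⟨U ×ˢ V, hU.prod hV, ⟨hxU, hyV⟩, fun q hq => hUV q.1 hq.1.1 q.2 hq.1.2 hq.2⟩

theorem isLocalHomeomorph_r : IsLocalHomeomorph g.r := by
  intro x
  obtain ⟨U, hU, hxU, hinj, himg⟩ := g.etale x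
  have : Nonempty G := ⟨x⟩
  have hopen : IsOpenMap (U.domRestrict g.r) := by
    intro V' hV'
    obtain ⟨V, hV, rfl⟩ := isOpen_induced_iff.mp hV'
    rw [image_domRestrict]
    exact himg _ inter_subset_right (hV.inter hU)
  exact ⟨OpenPartialHomeomorph.ofContinuousOpenRestrict hinj.toPartialEquiv
    g.continuous_r.continuousOn hopen hU, hxU, rfl⟩

def mulSet (A B : Set G) : Set G :=
  (fun p : G × G => g.mul p.1 p.2) '' (A ×ˢ B ∩ {p | g.s p.1 = g.r p.2})

theorem isCompact_mulSet [T2Space G] {A B : Set G} (hA : IsCompact A) (hB : IsCompact B) :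
    IsCompact (g.mulSet A B) :=
  ((hA.prod hB).inter_right (isClosed_eq (g.continuous_s.comp continuous_fst)
    (g.continuous_r.comp continuous_snd))).image_of_continuousOn
    (g.continuousOn_mul.mono inter_subset_right)

theorem mul_mem_mulSet {A B : Set G} {a b : G} (ha : a ∈ A) (hb : b ∈ B) (hab : g.s a = g.r b) :
    g.mul a b ∈ g.mulSet A B :=
  ⟨(a, b), ⟨⟨ha, hb⟩, hab⟩, rfl⟩

variable {g}

section Convolution

variable {U : Set G} {k f : G → ℂ}

theorem hasSum_conv_of_injOn (hU : InjOn g.r U) (hkU : support k ⊆ U) {x y : G} (hy : y ∈ U)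
    (hyx : g.r y = g.r x) :
    HasSum (fun z : g.rFiber (g.r x) => k z * f (g.mul (g.inv z) x))
      (k y * f (g.mul (g.inv y) x)) :=
  hasSum_single (f := fun z : g.rFiber (g.r x) => k z * f (g.mul (g.inv z) x)) ⟨y, hyx⟩
    fun z hz => by_contra fun hne =>
      hz (Subtype.ext (hU (hkU (left_ne_zero_of_mul hne)) hy (z.2.trans hyx.symm)))

theorem exists_hasSum_conv_of_injOn (hU : InjOn g.r U) (hkU : support k ⊆ U) (x : G) :
    ∃ y, g.r y = g.r x ∧
      HasSum (fun z : g.rFiber (g.r x) => k z * f (g.mul (g.inv z) x))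
        (k y * f (g.mul (g.inv y) x)) := by
  by_cases hex : ∃ y ∈ U, g.r y = g.r x
  · obtain ⟨y, hy, hyx⟩ := hex
    exact ⟨y, hyx, hasSum_conv_of_injOn hU hkU hy hyx⟩
  · push Not at hex
    have hk : ∀ z, g.r z = g.r x → k z = 0 := fun z hzx =>
      notMem_support.1 fun hz => hex z (hkU hz) hzx
    refine ⟨x, rfl, ?_⟩
    simp only [hk _ rfl, zero_mul]
    exact hasSum_zero.congr_fun fun z => by rw [hk z z.2, zero_mul]

theorem summable_conv_of_injOn (hU : InjOn g.r U) (hkU : support k ⊆ U) (x : G) :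
    Summable fun z : g.rFiber (g.r x) => k z * f (g.mul (g.inv z) x) :=
  let ⟨_, _, hsum⟩ := exists_hasSum_conv_of_injOn (f := f) hU hkU x
  hsum.summable

theorem conv_eq_of_injOn (hU : InjOn g.r U) (hkU : support k ⊆ U) (x : G) :
    ∃ y, g.r y = g.r x ∧ g.conv k f x = k y * f (g.mul (g.inv y) x) :=
  (exists_hasSum_conv_of_injOn hU hkU x).imp fun _ ⟨hyx, hsum⟩ => ⟨hyx, hsum.tsum_eq⟩

theorem conv_add_left {k₁ k₂ : G → ℂ}
    (h₁ : ∀ x, Summable fun z : g.rFiber (g.r x) => k₁ z * f (g.mul (g.inv z) x))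
    (h₂ : ∀ x, Summable fun z : g.rFiber (g.r x) => k₂ z * f (g.mul (g.inv z) x)) :
    g.conv (k₁ + k₂) f = g.conv k₁ f + g.conv k₂ f := by
  funext x
  simp only [conv, Pi.add_apply, add_mul]
  exact (h₁ x).tsum_add (h₂ x)

theorem bddFun_conv_of_injOn (hU : InjOn g.r U) (hkU : support k ⊆ U) (hk : BddFun k)
    (hf : BddFun f) : BddFun (g.conv k f) := by
  obtain ⟨Mk, hMk⟩ := hk
  obtain ⟨Mf, hMf⟩ := hf
  refine ⟨Mk * Mf, fun x => ?_⟩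
  obtain ⟨y, -, hxy⟩ := conv_eq_of_injOn (f := f) hU hkU x
  rw [hxy, norm_mul]
  exact mul_le_mul (hMk y) (hMf _) (norm_nonneg _) ((norm_nonneg _).trans (hMk y))

theorem measurable_conv_of_support_subset_source [MeasurableSpace G] [BorelSpace G]
    (hk : Measurable k) (hf : Measurable f) {e : OpenPartialHomeomorph G G} (hre : g.r = e)
    (hke : support k ⊆ e.source) : Measurable (g.conv k f) := by
  have hinj : InjOn g.r e.source := hre ▸ e.injOn
  have hrσ : ∀ u ∈ e.target, g.r (e.symm u) = u := fun u hu => by rw [hre]; exact e.right_inv hu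
  set W := g.r ⁻¹' e.target
  refine measurable_of_restrict_of_restrict_compl
    (e.open_target.preimage g.continuous_r).measurableSet ?_ ?_
  · have hσ : Continuous fun x : W => e.symm (g.r x) :=
      e.continuousOn_symm.comp_continuous (g.continuous_r.comp continuous_subtype_val)
        fun x => x.2
    have hz : Continuous fun x : W => g.mul (g.inv (e.symm (g.r x))) x :=
      g.continuousOn_mul.comp_continuous ((g.continuous_inv.comp hσ).prodMk continuous_subtype_val)
        fun x => show g.s (g.inv _) = _ by rw [g.s_inv, hrσ _ x.2]
    have hW : W.domRestrict (g.conv k f) =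
        fun x : W => k (e.symm (g.r x)) * f (g.mul (g.inv (e.symm (g.r x))) x) :=
      funext fun x => (hasSum_conv_of_injOn hinj hke (e.map_target x.2) (hrσ _ x.2)).tsum_eq
    rw [hW]
    exact (hk.comp hσ.measurable).mul (hf.comp hz.measurable)
  · have hWc : Wᶜ.domRestrict (g.conv k f) = 0 := by
      funext x
      obtain ⟨y, hyx, hxy⟩ := conv_eq_of_injOn (f := f) hinj hke x
      have hky : k y = 0 := notMem_support.1 fun hy =>
        x.2 (show g.r x ∈ e.target by rw [← hyx, hre]; exact e.map_source (hke hy))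
      simp only [domRestrict_apply, hxy, hky, zero_mul, Pi.zero_apply]
    rw [hWc]
    exact measurable_const

theorem measurable_conv_of_support_subset_biUnion [MeasurableSpace G] [BorelSpace G]
    (hU : InjOn g.r U) (hk : Measurable k) (hkU : support k ⊆ U) (hf : Measurable f) {ι : Type}
    {e : ι → OpenPartialHomeomorph G G} (hre : ∀ i, g.r = e i) {t : Finset ι}
    (hkt : support k ⊆ ⋃ i ∈ t, (e i).source) : Measurable (g.conv k f) := by
  classical
  induction t using Finset.induction_on generalizing k with
  | empty =>
    have hk0 : k = 0 := support_eq_empty_iff.1 (by simpa using hkt)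
    rw [show g.conv k f = 0 by funext x; simp [conv, hk0]]
    exact measurable_const
  | insert a t _ ih =>
    have hkVU : ∀ V : Set G, support (V.indicator k) ⊆ U := fun V =>
      support_indicator.subset.trans (inter_subset_right.trans hkU)
    have hsum : ∀ V : Set G, ∀ x, Summable fun z : g.rFiber (g.r x) =>
        V.indicator k z * f (g.mul (g.inv z) x) := fun V => summable_conv_of_injOn hU (hkVU V)
    rw [← indicator_self_add_compl (e a).source k, conv_add_left (hsum _) (hsum _)]
    refine (measurable_conv_of_support_subset_source (hk.indicator (e a).open_source.measurableSet)
      hf (hre a) support_indicator_subset).add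
      (ih (hk.indicator (e a).open_source.measurableSet.compl) (hkVU _) fun x hx => ?_)
    rw [support_indicator] at hx
    have hx' := hkt hx.2
    rw [Finset.set_biUnion_insert] at hx'
    exact hx'.resolve_left hx.1

theorem measurable_conv_of_injOn [MeasurableSpace G] [BorelSpace G]
    (hU : InjOn g.r U) (hkU : support k ⊆ U) (hk : Measurable k) (hkc : HasCompactSupport k)
    (hf : Measurable f) : Measurable (g.conv k f) := by
  choose e hxe hre using g.isLocalHomeomorph_r
  obtain ⟨t, ht⟩ := hkc.isCompact.elim_finite_subcover (fun x => (e x).source)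
    (fun x => (e x).open_source) fun x _ => mem_iUnion.2 ⟨x, hxe x⟩
  exact measurable_conv_of_support_subset_biUnion hU hk hkU hf hre ((subset_tsupport k).trans ht)

theorem isLocallyC0_conv_of_injOn [T2Space G] (hU : InjOn g.r U) (hkU : support k ⊆ U)
    (hkc : HasCompactSupport k) (hk : BddFun k) (hf : g.IsLocallyC0 f) :
    g.IsLocallyC0 (g.conv k f) := by
  obtain ⟨M, hM, hkM⟩ : ∃ M, 0 < M ∧ ∀ x, ‖k x‖ ≤ M := by
    obtain ⟨M, hkM⟩ := hk
    exact ⟨max M 1, by positivity, fun x => (hkM x).trans (le_max_left _ _)⟩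
  intro K hKu hKc ε hε
  obtain ⟨C, hCc, hC⟩ := hf (K ∪ g.s '' tsupport k)
    (union_subset hKu (image_subset_iff.2 fun x _ => g.s_mem_units x))
    (hKc.union (hkc.isCompact.image g.continuous_s)) (ε / M) (div_pos hε hM)
  refine ⟨g.mulSet (tsupport k) C, g.isCompact_mulSet hkc.isCompact hCc,
    fun x hrx hsx hxC => ?_⟩
  obtain ⟨y, hyx, hxy⟩ := conv_eq_of_injOn (f := f) hU hkU x
  rw [hxy, norm_mul]
  by_cases hky : k y = 0
  · simpa [hky] using hε
  have hyk : y ∈ tsupport k := subset_tsupport k hky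
  have hzC : g.mul (g.inv y) x ∉ C := fun hz =>
    hxC (mul_inv_cancel_left hyx ▸ g.mul_mem_mulSet hyk hz (r_inv_mul hyx).symm)
  have hfz := hC _ (Or.inr ⟨y, hyk, (r_inv_mul hyx).symm⟩) (Or.inl (by rwa [s_inv_mul hyx]))
    hzC
  calc ‖k y‖ * ‖f (g.mul (g.inv y) x)‖ ≤ M * ‖f (g.mul (g.inv y) x)‖ := by gcongr; exact hkM y
    _ < M * (ε / M) := by gcongr
    _ = ε := mul_div_cancel₀ ε hM.ne'

theorem mem_Bc_of_isCc [MeasurableSpace G] [OpensMeasurableSpace G] (hk : g.IsCc k) : k ∈ g.Bc :=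
  ⟨hk.1.measurable, hk.2.exists_bound_of_continuous hk.1, hk.2⟩

theorem conv_mem_B0l_of_injOn [MeasurableSpace G] [BorelSpace G] [T2Space G]
    (hk : k ∈ g.Bc) (hU : InjOn g.r U) (hkU : support k ⊆ U) (hf : f ∈ g.B0l) :
    g.conv k f ∈ g.B0l :=
  ⟨measurable_conv_of_injOn hU hkU hk.1 hk.2.2 hf.1, bddFun_conv_of_injOn hU hkU hk.2.1 hf.2.1,
    isLocallyC0_conv_of_injOn hU hkU hk.2.2 hk.2.1 hf.2.2⟩

end Convolution

section Involution

variable (g)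

def invHomeomorph : G ≃ₜ G where
  toFun := g.inv
  invFun := g.inv
  left_inv := g.inv_inv
  right_inv := g.inv_inv
  continuous_toFun := g.continuous_inv
  continuous_invFun := g.continuous_inv

def rFiberInvEquiv (x : G) : g.rFiber (g.r x) ≃ g.rFiber (g.r (g.inv x)) where
  toFun z := ⟨g.inv (g.mul (g.inv z) x), by
    show g.r _ = g.r (g.inv x)
    rw [r_inv, r_inv, s_inv_mul z.2]⟩
  invFun y := ⟨g.inv (g.mul (g.inv y) (g.inv x)), by
    show g.r _ = g.r x
    rw [r_inv, s_inv_mul y.2, g.s_inv]⟩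
  left_inv z := Subtype.ext (inv_mul_inv_inv_mul z.2)
  right_inv y := Subtype.ext (by
    have hy := inv_mul_inv_inv_mul y.2
    rwa [g.inv_inv x] at hy)

theorem star'_star' (h : G → ℂ) : g.star' (g.star' h) = h :=
  funext fun x => by simp [star', g.inv_inv]

theorem support_star' (h : G → ℂ) : support (g.star' h) = g.inv ⁻¹' support h := by
  ext x
  simp [star']

theorem star'_conv (h f : G → ℂ) : g.star' (g.conv h f) = g.conv (g.star' f) (g.star' h) := by
  funext x
  simp only [star', conv]
  rw [Complex.conj_tsum, ← (g.rFiberInvEquiv x).tsum_eq]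
  refine tsum_congr fun z => ?_
  simp only [rFiberInvEquiv, Equiv.coe_fn_mk, map_mul, g.inv_inv,
    g.mul_inv_cancel' _ _ ((g.s_inv z).trans z.2)]
  exact mul_comm _ _

theorem injOn_r_preimage_inv {U : Set G} (hU : InjOn g.s U) : InjOn g.r (g.inv ⁻¹' U) :=
  fun a ha b hb hab => by
    simpa only [g.inv_inv] using congrArg g.inv (hU ha hb (by rw [g.s_inv, g.s_inv, hab]))

variable {g} {h : G → ℂ}

theorem bddFun_star' (hh : BddFun h) : BddFun (g.star' h) :=
  let ⟨M, hM⟩ := hh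
  ⟨M, fun x => by simpa [star'] using hM (g.inv x)⟩

theorem isLocallyC0_star' (hh : g.IsLocallyC0 h) : g.IsLocallyC0 (g.star' h) := by
  intro K hKu hKc ε hε
  obtain ⟨C, hCc, hC⟩ := hh K hKu hKc ε hε
  refine ⟨g.inv '' C, hCc.image g.continuous_inv, fun x hrx hsx hx => ?_⟩
  have hxC : g.inv x ∉ C := fun hxC => hx ⟨g.inv x, hxC, g.inv_inv x⟩
  simpa [star'] using hC _ (by rwa [r_inv]) (by rwa [g.s_inv]) hxC

variable [MeasurableSpace G] [BorelSpace G]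

theorem measurable_star' (hh : Measurable h) : Measurable (g.star' h) :=
  Complex.continuous_conj.measurable.comp (hh.comp g.continuous_inv.measurable)

theorem star'_mem_Bc (hh : h ∈ g.Bc) : g.star' h ∈ g.Bc :=
  ⟨measurable_star' hh.1, bddFun_star' hh.2.1,
    (hh.2.2.comp_homeomorph g.invHomeomorph).comp_left (map_zero _)⟩

theorem star'_mem_B0l (hh : h ∈ g.B0l) : g.star' h ∈ g.B0l :=
  ⟨measurable_star' hh.1, bddFun_star' hh.2.1, isLocallyC0_star' hh.2.2⟩

theorem star'_mem_B0l_iff : g.star' h ∈ g.B0l ↔ h ∈ g.B0l :=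
  ⟨fun hh => g.star'_star' h ▸ star'_mem_B0l hh, star'_mem_B0l⟩

end Involution

end EtaleGroupoid

open EtaleGroupoid

/-- If `h ∈ C_c(𝒢)` is supported on a single bisection and
`f ∈ B_{0,l}(𝒢)`, then `h * f ∈ B_{0,l}(𝒢)`; likewise if `h ∈ B_{0,l}(𝒢)` and
`f ∈ C_c(𝒢)` is supported on a single bisection, then `h * f ∈ B_{0,l}(𝒢)`.
(Here `h ∈ B_{0,l}(𝒢)` if and only if `h* ∈ B_{0,l}(𝒢)`.) -/
theorem conv_bisection_preserves_B0l (g : EtaleGroupoid G) :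
    (∀ f h : G → ℂ, g.IsCc h →
      (∃ U : Set G, IsBisection g U ∧ Function.support h ⊆ U) →
      f ∈ g.B0l → g.conv h f ∈ g.B0l) ∧
    (∀ f h : G → ℂ, h ∈ g.B0l → g.IsCc f →
      (∃ U : Set G, IsBisection g U ∧ Function.support f ⊆ U) →
      g.conv h f ∈ g.B0l) ∧
    (∀ h : G → ℂ, h ∈ g.B0l ↔ g.star' h ∈ g.B0l) := by
  refine ⟨fun f h hh ⟨U, hU, hhU⟩ hf => conv_mem_B0l_of_injOn (mem_Bc_of_isCc hh) hU.1 hhU hf,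
    fun f h hh hf ⟨U, hU, hfU⟩ => ?_, fun h => star'_mem_B0l_iff.symm⟩
  rw [← star'_mem_B0l_iff, star'_conv]
  exact conv_mem_B0l_of_injOn (star'_mem_Bc (mem_Bc_of_isCc hf)) (g.injOn_r_preimage_inv hU.2)
    ((g.support_star' f).trans_subset (Set.preimage_mono hfU)) (star'_mem_B0l hh)

end Statements
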